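/- Let l ≥ 1 and let T be a full binary tree with d(T) = l. Let k̃ = min{k : (l,2k) ∈ T} and define T⁻ = T \ {(l,2k̃), (l,2k̃+1)}. Then T⁻ is again a full binary tree, and for every full binary tree T' the number of full binary trees T with d(T) = l and T⁻ = T' is at most 2^{l−1}. -/
import Mathlib


/-- A full binary tree (as a finite set of nodes): nodes `(l,k)` satisfy `k < 2^l`, and any
node of positive depth has its parent `(l-1, ⌊k/2⌋)` and its sibling `(l, k + (-1)^k)`
in the tree. -/
def IsFullBinaryTree (T : Finset (ℕ × ℕ)) : Prop :=
  (∀ p ∈ T, p.2 < 2 ^ p.1) ∧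
  ∀ p ∈ T, 0 < p.1 →
    (p.1 - 1, p.2 / 2) ∈ T ∧ (p.1, if p.2 % 2 = 0 then p.2 + 1 else p.2 - 1) ∈ T

/-- The depth `d(T)`: the maximal level of a node of `T`. -/
def treeDepth (T : Finset (ℕ × ℕ)) : ℕ := T.sup fun p => p.1

/-- `T⁻ = T \ {(l, 2k̃), (l, 2k̃+1)}`, where `l = d(T)` and
`k̃ = min {k : (l, 2k) ∈ T}`. -/
noncomputable def treeMinus (T : Finset (ℕ × ℕ)) : Finset (ℕ × ℕ) :=
  T \ {(treeDepth T, 2 * sInf {k : ℕ | (treeDepth T, 2 * k) ∈ T}),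
       (treeDepth T, 2 * sInf {k : ℕ | (treeDepth T, 2 * k) ∈ T} + 1)}

/-- Let `l ≥ 1` and let `T` be a full binary tree with `d(T) = l`. Then
`T⁻ = T \ {(l,2k̃), (l,2k̃+1)}` (with `k̃ = min{k : (l,2k) ∈ T}`) is again a full binary
tree, and for every full binary tree `T'`, the number of full binary trees `S` with
`d(S) = l` and `S⁻ = T'` is at most `2^{l-1}`. -/
lemma aux_exists_even (T : Finset (ℕ × ℕ)) (hT : IsFullBinaryTree T) (l : ℕ) (hl : 1 ≤ l)
    (hd : treeDepth T = l) : ∃ k, (l, 2 * k) ∈ T := by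
  have hne : T.Nonempty := by
    rcases T.eq_empty_or_nonempty with h | h
    · exfalso; rw [h] at hd; simp [treeDepth] at hd; omega
    · exact h
  obtain ⟨p, hp, hpl⟩ := Finset.exists_mem_eq_sup T hne (fun p => p.1)
  have hpl2 : p.1 = l := by rw [← hd, treeDepth, hpl]
  rw [← hpl2]
  rcases Nat.even_or_odd p.2 with he | ho
  · refine ⟨p.2 / 2, ?_⟩
    have he2 := Nat.even_iff.mp he
    have : 2 * (p.2 / 2) = p.2 := by omega
    rw [this]; exact hp
  · have hpos : 0 < p.1 := by rw [← hpl, hd] at *; omega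
    have hs := (hT.2 p hp hpos).2
    have hodd : p.2 % 2 = 1 := Nat.odd_iff.mp ho
    rw [if_neg (by omega)] at hs
    refine ⟨p.2 / 2, ?_⟩
    have : 2 * (p.2 / 2) = p.2 - 1 := by omega
    rw [this]; exact hs

lemma aux_pair_mem (T : Finset (ℕ × ℕ)) (hT : IsFullBinaryTree T) (l : ℕ) (hl : 1 ≤ l)
    (hd : treeDepth T = l) :
    (l, 2 * sInf {k : ℕ | (l, 2 * k) ∈ T}) ∈ T ∧
    (l, 2 * sInf {k : ℕ | (l, 2 * k) ∈ T} + 1) ∈ T := by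
  have hne : {k : ℕ | (l, 2 * k) ∈ T}.Nonempty := aux_exists_even T hT l hl hd
  have h1 : (l, 2 * sInf {k : ℕ | (l, 2 * k) ∈ T}) ∈ T := Nat.sInf_mem hne
  refine ⟨h1, ?_⟩
  have hs := (hT.2 _ h1 (by omega)).2
  simpa using hs

theorem stmt_19 (l : ℕ) (hl : 1 ≤ l) (T : Finset (ℕ × ℕ))
    (hT : IsFullBinaryTree T) (hd : treeDepth T = l) :
    IsFullBinaryTree (treeMinus T) ∧
    ∀ T' : Finset (ℕ × ℕ), IsFullBinaryTree T' →
      {S : Finset (ℕ × ℕ) | IsFullBinaryTree S ∧ treeDepth S = l ∧ treeMinus S = T'}.ncard ≤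
        2 ^ (l - 1) := by
  constructor
  · -- T⁻ is a full binary tree
    have hmem : ∀ p : ℕ × ℕ, p ∈ treeMinus T ↔
        p ∈ T ∧ p ≠ (l, 2 * sInf {k : ℕ | (l, 2 * k) ∈ T}) ∧
          p ≠ (l, 2 * sInf {k : ℕ | (l, 2 * k) ∈ T} + 1) := by
      intro p
      simp [treeMinus, hd, and_assoc]
    set kt := sInf {k : ℕ | (l, 2 * k) ∈ T} with hkt
    constructor
    · intro p hp
      exact hT.1 p ((hmem p).mp hp).1
    · intro p hp hpos
      obtain ⟨hpT, hp1, hp2⟩ := (hmem p).mp hp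
      have hlev : p.1 ≤ l := by
        rw [← hd]; exact Finset.le_sup (f := fun p => p.1) hpT
      obtain ⟨hpar, hsib⟩ := hT.2 p hpT hpos
      constructor
      · rw [hmem]
        refine ⟨hpar, ?_, ?_⟩ <;>
        · intro h
          have := congrArg Prod.fst h
          simp at this
          omega
      · rw [hmem]
        refine ⟨hsib, ?_, ?_⟩
        · intro h
          have h1 := congrArg Prod.fst h
          have h2 := congrArg Prod.snd h
          simp at h1 h2
          by_cases hpar : p.2 % 2 = 0
          · rw [if_pos hpar] at h2; omega
          · rw [if_neg hpar] at h2
            apply hp2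
            have : p = (p.1, p.2) := rfl
            rw [this, Prod.mk.injEq]
            omega
        · intro h
          have h1 := congrArg Prod.fst h
          have h2 := congrArg Prod.snd h
          simp at h1 h2
          by_cases hpar : p.2 % 2 = 0
          · rw [if_pos hpar] at h2
            apply hp1
            have : p = (p.1, p.2) := rfl
            rw [this, Prod.mk.injEq]
            omega
          · rw [if_neg hpar] at h2; omega
  · -- counting
    intro T' hT'
    set N := 2 ^ (l - 1) with hN
    set f : ℕ → Finset (ℕ × ℕ) := fun k => T' ∪ {(l, 2 * k), (l, 2 * k + 1)} with hf
    have hsub : {S : Finset (ℕ × ℕ) | IsFullBinaryTree S ∧ treeDepth S = l ∧ treeMinus S = T'}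
        ⊆ f '' Set.Iio N := by
      rintro S ⟨hS, hdS, hmS⟩
      set kS := sInf {k : ℕ | (l, 2 * k) ∈ S} with hkS
      obtain ⟨hm1, hm2⟩ := aux_pair_mem S hS l hl hdS
      refine ⟨kS, ?_, ?_⟩
      · have hb := hS.1 _ hm1
        simp only at hb
        have h2 : 2 ^ l = 2 * 2 ^ (l - 1) := by
          rw [← pow_succ']
          congr 1
          omega
        simp only [Set.mem_Iio, hN]
        omega
      · have hpairsub : {(l, 2 * kS), (l, 2 * kS + 1)} ⊆ S := by
          intro x hx
          simp at hx
          rcases hx with h | h <;> rw [h] <;> assumption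
        have : treeMinus S = S \ {(l, 2 * kS), (l, 2 * kS + 1)} := by
          rw [treeMinus, hdS, hkS]
        rw [this] at hmS
        rw [hf]
        simp only
        rw [← hmS, Finset.sdiff_union_of_subset hpairsub]
    calc {S : Finset (ℕ × ℕ) | IsFullBinaryTree S ∧ treeDepth S = l ∧ treeMinus S = T'}.ncard
        ≤ (f '' Set.Iio N).ncard :=
          Set.ncard_le_ncard hsub ((Set.finite_Iio N).image f)
      _ ≤ (Set.Iio N).ncard := Set.ncard_image_le (Set.finite_Iio N)
      _ = N := by rw [← Finset.coe_range, Set.ncard_coe_finset, Finset.card_range]
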